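/- Let $q = p^r$, $r \geq 1$, and let $a, b \in \mathbb{F}_p$, $i > j \geq 1$ with $i$ relatively prime to $p$. Then in the Nottingham group over $\mathbb{F}_p$, the commutator $[t + at^{1+qj}, t + bt^{1+qi}] = t - iab\, t^{1+qi+q^2 j} + (\text{terms of degree} > 1+qi+q^2j)$. -/

import Mathlib

open PowerSeries Finset

/-- Composition of power series `f ∘ g` (intended for `g` with zero constant term). -/
noncomputable def pcomp {k : Type} [CommRing k] (f g : PowerSeries k) : PowerSeries k :=
  PowerSeries.mk fun n =>
    PowerSeries.coeff n (Polynomial.eval₂ (PowerSeries.C) g (PowerSeries.trunc (n + 1) f))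

/-- `n`-fold compositional iterate of `f`. -/
noncomputable def pcompIter {k : Type} [CommRing k] (f : PowerSeries k) : ℕ → PowerSeries k
  | 0 => PowerSeries.X
  | n + 1 => pcomp f (pcompIter f n)

/-- Membership in the Nottingham group: `f = t + a₂ t² + ⋯`. -/
def IsNott {k : Type} [CommRing k] (f : PowerSeries k) : Prop :=
  PowerSeries.coeff 0 f = 0 ∧ PowerSeries.coeff 1 f = 1

section Infra

variable {k : Type} [CommRing k]

lemma coeff_pow_zero {g : PowerSeries k} (hg : constantCoeff g = 0)
    {m n : ℕ} (h : n < m) : coeff n (g ^ m) = 0 := by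
  have hdvd : (X : PowerSeries k) ^ m ∣ g ^ m :=
    pow_dvd_pow_of_dvd (X_dvd_iff.2 hg) m
  exact (X_pow_dvd_iff.1 hdvd) n h

lemma coeff_pcomp_sum (f g : PowerSeries k) (n : ℕ) :
    coeff n (pcomp f g) = ∑ m ∈ range (n + 1), coeff m f * coeff n (g ^ m) := by
  simp only [pcomp, coeff_mk]
  rw [eval₂_trunc_eq_sum_range, map_sum]
  refine Finset.sum_congr rfl fun m _ => ?_
  rw [← coeff_C_mul]

lemma coeff_pcomp_sum_big {g : PowerSeries k} (hg : constantCoeff g = 0)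
    (f : PowerSeries k) {n N : ℕ} (hN : n + 1 ≤ N) :
    coeff n (pcomp f g) = ∑ m ∈ range N, coeff m f * coeff n (g ^ m) := by
  rw [coeff_pcomp_sum]
  refine Finset.sum_subset (Finset.range_subset_range.2 hN) fun m _ hm => ?_
  rw [Finset.mem_range, not_lt] at hm
  rw [coeff_pow_zero hg (by omega), mul_zero]

lemma coeff_eval₂_zero {g : PowerSeries k} (hg : constantCoeff g = 0)
    (P : Polynomial k) (n : ℕ) (hP : ∀ m ≤ n, P.coeff m = 0) :
    coeff n (Polynomial.eval₂ (C) g P) = 0 := by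
  rw [Polynomial.eval₂_eq_sum, Polynomial.sum, map_sum]
  refine Finset.sum_eq_zero fun m _ => ?_
  rw [coeff_C_mul]
  rcases le_or_gt m n with h | h
  · rw [hP m h, zero_mul]
  · rw [coeff_pow_zero hg h, mul_zero]

lemma coeff_pcomp_eq {g : PowerSeries k} (hg : constantCoeff g = 0)
    (f : PowerSeries k) (P : Polynomial k) (n : ℕ)
    (hP : ∀ m ≤ n, P.coeff m = coeff m f) :
    coeff n (pcomp f g) = coeff n (Polynomial.eval₂ (C) g P) := by
  have h0 : coeff n (Polynomial.eval₂ (C) g (P - trunc (n+1) f)) = 0 := by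
    refine coeff_eval₂_zero hg _ n fun m hm => ?_
    rw [Polynomial.coeff_sub, hP m hm, coeff_trunc, if_pos (by omega), sub_self]
  rw [Polynomial.eval₂_sub, map_sub, sub_eq_zero] at h0
  simp only [pcomp, coeff_mk]
  exact h0.symm

lemma pcomp_add (f₁ f₂ g : PowerSeries k) :
    pcomp (f₁ + f₂) g = pcomp f₁ g + pcomp f₂ g := by
  ext n
  simp only [pcomp, coeff_mk, map_add, Polynomial.eval₂_add]

lemma pcomp_C (c : k) (g : PowerSeries k) : pcomp (C c) g = C c := by
  ext n
  simp only [pcomp, coeff_mk, trunc_C, Polynomial.eval₂_C]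

lemma pcomp_one (g : PowerSeries k) : pcomp 1 g = 1 := by
  have : (1 : PowerSeries k) = C 1 := by simp
  rw [this, pcomp_C]

lemma pcomp_X {g : PowerSeries k} (hg : constantCoeff g = 0) : pcomp X g = g := by
  ext n
  rw [coeff_pcomp_eq hg X Polynomial.X n fun m _ => by
    rw [Polynomial.coeff_X, PowerSeries.coeff_X]
    by_cases h : m = 1 <;> simp [h, eq_comm]]
  rw [Polynomial.eval₂_X]

lemma pcomp_mul {g : PowerSeries k} (hg : constantCoeff g = 0) (f₁ f₂ : PowerSeries k) :
    pcomp (f₁ * f₂) g = pcomp f₁ g * pcomp f₂ g := by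
  ext n
  have key : ∀ m ≤ n, (trunc (n+1) f₁ * trunc (n+1) f₂).coeff m = coeff m (f₁ * f₂) := by
    intro m hm
    have h := (coeff_mul_eq_coeff_trunc_mul_trunc₂ (n := m) (a := n+1) (b := n+1) f₁ f₂
      (by omega) (by omega)).symm
    rw [← Polynomial.coeff_coe, Polynomial.coe_mul]
    exact h
  rw [coeff_pcomp_eq hg _ _ n key, Polynomial.eval₂_mul, coeff_mul, coeff_mul]
  refine Finset.sum_congr rfl fun P hP => ?_
  rw [Finset.HasAntidiagonal.mem_antidiagonal] at hP
  rw [← coeff_pcomp_eq hg f₁ _ P.1 fun m hm => (coeff_trunc m _ f₁).trans (if_pos (by omega)),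
    ← coeff_pcomp_eq hg f₂ _ P.2 fun m hm => (coeff_trunc m _ f₂).trans (if_pos (by omega))]

lemma pcomp_pow {g : PowerSeries k} (hg : constantCoeff g = 0) (f : PowerSeries k) (m : ℕ) :
    pcomp (f ^ m) g = pcomp f g ^ m := by
  induction m with
  | zero => simpa using pcomp_one g
  | succ m ih => rw [pow_succ, pow_succ, pcomp_mul hg, ih]

lemma constantCoeff_pcomp {g : PowerSeries k} (_hg : constantCoeff g = 0)
    (f : PowerSeries k) : constantCoeff (pcomp f g) = constantCoeff f := by
  have h0 := coeff_pcomp_sum f g 0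
  simp only [coeff_zero_eq_constantCoeff] at h0 ⊢
  simpa using h0

lemma coeff_one_pcomp {g : PowerSeries k} (_hg : constantCoeff g = 0)
    (f : PowerSeries k) : coeff 1 (pcomp f g) = coeff 1 f * coeff 1 g := by
  have h0 := coeff_pcomp_sum f g 1
  rw [h0]
  rw [Finset.sum_range_succ, Finset.sum_range_one]
  simp [coeff_one]

lemma pcomp_assoc {g h : PowerSeries k} (hg : constantCoeff g = 0)
    (hh : constantCoeff h = 0) (f : PowerSeries k) :
    pcomp (pcomp f g) h = pcomp f (pcomp g h) := by
  ext n
  rw [coeff_pcomp_sum (pcomp f g) h, coeff_pcomp_sum f (pcomp g h)]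
  have lhs : ∀ m ∈ range (n+1), coeff m (pcomp f g) * coeff n (h ^ m)
      = ∑ u ∈ range (n+1), coeff u f * (coeff m (g ^ u) * coeff n (h ^ m)) := by
    intro m hm
    rw [Finset.mem_range] at hm
    rw [coeff_pcomp_sum_big hg f (by omega : m + 1 ≤ n + 1), Finset.sum_mul]
    exact Finset.sum_congr rfl fun u _ => mul_assoc _ _ _
  rw [Finset.sum_congr rfl lhs, Finset.sum_comm]
  refine Finset.sum_congr rfl fun u _ => ?_
  rw [← pcomp_pow hh, coeff_pcomp_sum (g ^ u) h, Finset.mul_sum]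

lemma pcomp_X_right (f : PowerSeries k) : pcomp f X = f := by
  ext n
  rw [coeff_pcomp_sum]
  have : ∀ m ∈ range (n+1), coeff m f * coeff n ((X : PowerSeries k) ^ m)
      = if n = m then coeff m f else 0 := by
    intro m hm
    rw [coeff_X_pow]
    split_ifs <;> simp
  rw [Finset.sum_congr rfl this, Finset.sum_ite_eq]
  simp

lemma coeff_self_pow {g : PowerSeries k} (hg : constantCoeff g = 0) (n : ℕ) :
    coeff n (g ^ n) = (coeff 1 g) ^ n := by
  induction n with
  | zero => simp
  | succ n ih =>
    rw [pow_succ', coeff_mul]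
    rw [Finset.sum_eq_single (1, n)]
    · rw [ih, pow_succ']
    · rintro ⟨s, t⟩ hst hne
      rw [Finset.HasAntidiagonal.mem_antidiagonal] at hst
      simp only at hne ⊢
      rcases Nat.lt_or_ge t n with h | h
      · rw [coeff_pow_zero hg h, mul_zero]
      · have hs : s = 0 ∨ (s = 1 ∧ t = n) := by omega
        rcases hs with hs | ⟨hs, ht⟩
        · subst hs; rw [coeff_zero_eq_constantCoeff, hg, zero_mul]
        · exact absurd (by rw [hs, ht]) hne
    · intro hmem
      exact absurd (Finset.HasAntidiagonal.mem_antidiagonal.2 (by omega)) hmem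

lemma pow_split1 (e d : ℕ) (c : k) (j : ℕ) :
    ∃ T, ((X : PowerSeries k) ^ e + C c * X ^ (e + d)) ^ j
      = X ^ (e * j) + X ^ (e * j + d) * T := by
  induction j with
  | zero => exact ⟨0, by simp⟩
  | succ j ih =>
    obtain ⟨T, hT⟩ := ih
    exact ⟨C c + T + C c * T * X ^ d, by rw [pow_succ, hT]; ring⟩

lemma pow_split2 (e d : ℕ) (c : k) (i : ℕ) :
    ∃ T, ((X : PowerSeries k) ^ e + C c * X ^ (e + d)) ^ i
      = X ^ (e * i) + C ((i : k) * c) * X ^ (e * i + d) + X ^ (e * i + 2 * d) * T := by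
  induction i with
  | zero => exact ⟨0, by simp⟩
  | succ i ih =>
    obtain ⟨T, hT⟩ := ih
    refine ⟨C ((i : k) * c * c) + T + C c * T * X ^ d, ?_⟩
    have hcast : ((i : k) + 1) * c = (i : k) * c + c := by ring
    rw [pow_succ, hT, Nat.cast_add, Nat.cast_one, hcast]
    simp only [map_add, map_mul]
    ring

lemma pcomp_nott {g : PowerSeries k} (hg : constantCoeff g = 0) (a : k) (m : ℕ) :
    pcomp (X + C a * X ^ m) g = g + C a * g ^ m := by
  rw [pcomp_add, pcomp_X hg, pcomp_mul hg, pcomp_C, pcomp_pow hg, pcomp_X hg]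

lemma sum_helper {c B : PowerSeries k} (hB0 : constantCoeff B = 0)
    (hB1 : coeff 1 B = 1) (hc0 : coeff 0 c = 0) (hc1 : coeff 1 c = 1)
    {n : ℕ} (hn : 2 ≤ n) (hmid : ∀ m, 2 ≤ m → m < n → coeff m c = 0) :
    coeff n (pcomp c B) = coeff n B + coeff n c := by
  rw [coeff_pcomp_sum]
  have key : ∀ m ∈ range (n+1), coeff m c * coeff n (B ^ m)
      = (if m = 1 then coeff n B else 0) + (if m = n then coeff n c else 0) := by
    intro m hm
    rw [Finset.mem_range] at hm
    rcases Nat.eq_or_lt_of_le (Nat.zero_le m) with h0 | h0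
    · rw [← h0, hc0, zero_mul, if_neg (by omega), if_neg (by omega), add_zero]
    rcases eq_or_ne m 1 with h1 | h1
    · subst h1
      rw [hc1, one_mul, pow_one, if_pos rfl, if_neg (by omega), add_zero]
    rcases eq_or_ne m n with h2 | h2
    · subst h2
      rw [coeff_self_pow hB0, hB1, one_pow, mul_one, if_neg h1, if_pos rfl, zero_add]
    · rw [hmid m (by omega) (by omega), zero_mul, if_neg h1, if_neg h2, add_zero]
  rw [Finset.sum_congr rfl key, Finset.sum_add_distrib,
    Finset.sum_ite_eq' (range (n+1)) 1 (fun _ => coeff n B),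
    Finset.sum_ite_eq' (range (n+1)) n (fun _ => coeff n c)]
  rw [if_pos (Finset.mem_range.2 (by omega)), if_pos (Finset.mem_range.2 (by omega))]

end Infra
theorem stmt14 (p : ℕ) [Fact p.Prime] (r : ℕ) (hr : 1 ≤ r) (q : ℕ) (hq : q = p ^ r)
    (i j : ℕ) (hj : 1 ≤ j) (hij : j < i) (hip : ¬ p ∣ i) (a b : ZMod p)
    (finv ginv : PowerSeries (ZMod p))
    (hfinv0 : PowerSeries.coeff 0 finv = 0)
    (hginv0 : PowerSeries.coeff 0 ginv = 0)
    (h1 : pcomp (PowerSeries.X + PowerSeries.C a * PowerSeries.X ^ (1 + q * j)) finv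
            = PowerSeries.X)
    (h2 : pcomp finv (PowerSeries.X + PowerSeries.C a * PowerSeries.X ^ (1 + q * j))
            = PowerSeries.X)
    (h3 : pcomp (PowerSeries.X + PowerSeries.C b * PowerSeries.X ^ (1 + q * i)) ginv
            = PowerSeries.X)
    (h4 : pcomp ginv (PowerSeries.X + PowerSeries.C b * PowerSeries.X ^ (1 + q * i))
            = PowerSeries.X) :
    PowerSeries.coeff 0
        (pcomp (pcomp (pcomp
          (PowerSeries.X + PowerSeries.C a * PowerSeries.X ^ (1 + q * j))
          (PowerSeries.X + PowerSeries.C b * PowerSeries.X ^ (1 + q * i))) finv) ginv)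
        = 0 ∧
    PowerSeries.coeff 1
        (pcomp (pcomp (pcomp
          (PowerSeries.X + PowerSeries.C a * PowerSeries.X ^ (1 + q * j))
          (PowerSeries.X + PowerSeries.C b * PowerSeries.X ^ (1 + q * i))) finv) ginv)
        = 1 ∧
    (∀ m, 2 ≤ m → m < 1 + q * i + q ^ 2 * j →
      PowerSeries.coeff m
        (pcomp (pcomp (pcomp
          (PowerSeries.X + PowerSeries.C a * PowerSeries.X ^ (1 + q * j))
          (PowerSeries.X + PowerSeries.C b * PowerSeries.X ^ (1 + q * i))) finv) ginv)
        = 0) ∧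
    PowerSeries.coeff (1 + q * i + q ^ 2 * j)
        (pcomp (pcomp (pcomp
          (PowerSeries.X + PowerSeries.C a * PowerSeries.X ^ (1 + q * j))
          (PowerSeries.X + PowerSeries.C b * PowerSeries.X ^ (1 + q * i))) finv) ginv)
        = -(i : ZMod p) * a * b := by
  have hp2 : 2 ≤ p := (Fact.out : p.Prime).two_le
  have hq2 : 2 ≤ q := by
    have : p ≤ p ^ r := Nat.le_self_pow (by omega) p
    omega
  set f : PowerSeries (ZMod p) := PowerSeries.X + PowerSeries.C a * PowerSeries.X ^ (1 + q * j)
    with hfdef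
  set g : PowerSeries (ZMod p) := PowerSeries.X + PowerSeries.C b * PowerSeries.X ^ (1 + q * i)
    with hgdef
  set N : ℕ := 1 + q * i + q ^ 2 * j with hN
  have hqi1 : 1 ≤ q * i := Nat.mul_pos (by omega) (by omega)
  have hqj1 : 1 ≤ q * j := Nat.mul_pos (by omega) hj
  have hq2j1 : 1 ≤ q ^ 2 * j := Nat.mul_pos (by positivity) hj
  have hf0 : constantCoeff f = 0 := by
    have : (1 + q * j) = (q * j) + 1 := by omega
    simp [hfdef, this, pow_succ, map_add, map_mul]
  have hg0 : constantCoeff g = 0 := by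
    have : (1 + q * i) = (q * i) + 1 := by omega
    simp [hgdef, this, pow_succ, map_add, map_mul]
  have hf1 : coeff 1 f = 1 := by
    rw [hfdef, map_add, coeff_one_X, coeff_C_mul, coeff_X_pow, if_neg (by omega)]
    ring
  have hg1 : coeff 1 g = 1 := by
    rw [hgdef, map_add, coeff_one_X, coeff_C_mul, coeff_X_pow, if_neg (by omega)]
    ring
  -- Frobenius
  haveI : CharP (PowerSeries (ZMod p)) p := by
    refine charP_of_injective_ringHom (f := (C : ZMod p →+* PowerSeries (ZMod p))) ?_ p
    intro x y hxy
    simpa using congrArg (constantCoeff) hxy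
  have frob : ∀ x y : PowerSeries (ZMod p), (x + y) ^ q = x ^ q + y ^ q := by
    intro x y; rw [hq]; exact add_pow_char_pow x y (p := p) (n := r)
  have frobc : ∀ z : ZMod p, z ^ q = z := by
    intro z; rw [hq]; exact ZMod.pow_card_pow z
  have hgq : g ^ q = X ^ q + C b * X ^ (q + q ^ 2 * i) := by
    rw [hgdef, frob, mul_pow, ← map_pow, frobc, ← pow_mul]
    congr 2
    ring
  have hfq : f ^ q = X ^ q + C a * X ^ (q + q ^ 2 * j) := by
    rw [hfdef, frob, mul_pow, ← map_pow, frobc, ← pow_mul]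
    congr 2
    ring
  obtain ⟨T₁, hT₁⟩ := pow_split1 q (q ^ 2 * i) b j
  obtain ⟨T₂, hT₂⟩ := pow_split2 q (q ^ 2 * j) a i
  rw [← hgq] at hT₁
  rw [← hfq] at hT₂
  set mainS : PowerSeries (ZMod p) := X + C a * X ^ (1 + q * j) + C b * X ^ (1 + q * i)
      + C (a * b) * X ^ (1 + q * i + q * j) with hmainS
  -- expansion of f ∘ g
  have hApow : g ^ (1 + q * j) = g * ((g ^ q) ^ j) := by
    rw [pow_add, pow_one, pow_mul]
  have hAeq : pcomp f g = mainS + C a * g * (X ^ (q * j + q ^ 2 * i) * T₁) := by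
    rw [hfdef, pcomp_nott hg0, hApow, hT₁, hgdef, hmainS]
    simp only [map_mul]
    ring
  -- expansion of g ∘ f
  have hBpow : f ^ (1 + q * i) = f * ((f ^ q) ^ i) := by
    rw [pow_add, pow_one, pow_mul]
  have hBeq : pcomp g f = mainS + C ((i : ZMod p) * a * b) * X ^ N
      + (C ((i : ZMod p) * a * b * a) * (X ^ N * X ^ (q * j))
        + C b * f * (X ^ (q * i + 2 * (q ^ 2 * j)) * T₂)) := by
    rw [hgdef, pcomp_nott hf0, hBpow, hT₂, hfdef, hmainS, hN]
    simp only [map_mul]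
    ring
  -- divisibility of remainders
  obtain ⟨w, hw⟩ := X_dvd_iff.2 hg0
  obtain ⟨w', hw'⟩ := X_dvd_iff.2 hf0
  have hineq1 : N + 1 ≤ 1 + (q * j + q ^ 2 * i) := by
    obtain ⟨d, hd⟩ : ∃ d, i = j + d + 1 := ⟨i - j - 1, by omega⟩
    subst hd
    rw [hN]
    have e1 : q * d ≤ q ^ 2 * d := Nat.mul_le_mul_right d (by nlinarith)
    have e2 : q + 2 ≤ q ^ 2 := by nlinarith
    nlinarith [e1, e2]
  have hdvdA : (X : PowerSeries (ZMod p)) ^ (N + 1) ∣ pcomp f g - mainS := by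
    have heq : pcomp f g - mainS = X ^ (1 + (q * j + q ^ 2 * i)) * (C a * w * T₁) := by
      rw [hAeq, hw]
      ring
    rw [heq]
    exact Dvd.dvd.mul_right (pow_dvd_pow X hineq1) _
  have hdvdB : (X : PowerSeries (ZMod p)) ^ (N + 1)
      ∣ pcomp g f - (mainS + C ((i : ZMod p) * a * b) * X ^ N) := by
    have heq : pcomp g f - (mainS + C ((i : ZMod p) * a * b) * X ^ N)
        = X ^ (N + q * j) * C ((i : ZMod p) * a * b * a)
          + X ^ (1 + (q * i + 2 * (q ^ 2 * j))) * (C b * w' * T₂) := by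
      rw [hBeq, hw']
      ring
    rw [heq]
    refine dvd_add (Dvd.dvd.mul_right (pow_dvd_pow X (by omega)) _)
      (Dvd.dvd.mul_right (pow_dvd_pow X (by omega)) _)
  have hK : ∀ n < N + 1, coeff n (pcomp g f) - coeff n (pcomp f g)
      - coeff n (C ((i : ZMod p) * a * b) * X ^ N) = 0 := by
    have hdvd : (X : PowerSeries (ZMod p)) ^ (N + 1)
        ∣ pcomp g f - pcomp f g - C ((i : ZMod p) * a * b) * X ^ N := by
      have heq : pcomp g f - pcomp f g - C ((i : ZMod p) * a * b) * X ^ N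
          = (pcomp g f - (mainS + C ((i : ZMod p) * a * b) * X ^ N)) - (pcomp f g - mainS) := by
        ring
      rw [heq]
      exact dvd_sub hdvdB hdvdA
    intro n hn
    have hcn := X_pow_dvd_iff.1 hdvd n hn
    simpa [map_sub] using hcn
  -- the commutator
  set A : PowerSeries (ZMod p) := pcomp f g with hAdef
  set B : PowerSeries (ZMod p) := pcomp g f with hBdef
  set c : PowerSeries (ZMod p) := pcomp (pcomp A finv) ginv with hcdef
  have hA0 : constantCoeff A = 0 := by rw [hAdef, constantCoeff_pcomp hg0, hf0]
  have hB0 : constantCoeff B = 0 := by rw [hBdef, constantCoeff_pcomp hf0, hg0]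
  have hA1 : coeff 1 A = 1 := by rw [hAdef, coeff_one_pcomp hg0, hf1, hg1, mul_one]
  have hB1 : coeff 1 B = 1 := by rw [hBdef, coeff_one_pcomp hf0, hf1, hg1, mul_one]
  have hfinv1 : coeff 1 finv = 1 := by
    have h := congrArg (coeff 1) h2
    rwa [coeff_one_pcomp hf0, hf1, mul_one, coeff_one_X] at h
  have hginv1 : coeff 1 ginv = 1 := by
    have h := congrArg (coeff 1) h4
    rwa [coeff_one_pcomp hg0, hg1, mul_one, coeff_one_X] at h
  have hfinv0' : constantCoeff finv = 0 := by
    rw [← coeff_zero_eq_constantCoeff]; exact hfinv0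
  have hginv0' : constantCoeff ginv = 0 := by
    rw [← coeff_zero_eq_constantCoeff]; exact hginv0
  have hc0 : coeff 0 c = 0 := by
    rw [coeff_zero_eq_constantCoeff, hcdef, constantCoeff_pcomp hginv0',
      constantCoeff_pcomp hfinv0', hA0]
  have hc1 : coeff 1 c = 1 := by
    rw [hcdef, coeff_one_pcomp hginv0', coeff_one_pcomp hfinv0', hA1, hfinv1, hginv1]
    ring
  have hcB : pcomp c B = A := by
    have step1 : pcomp c g = pcomp A finv := by
      rw [hcdef, pcomp_assoc hginv0' hg0, h4, pcomp_X_right]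
    rw [hBdef, ← pcomp_assoc hg0 hf0, step1, pcomp_assoc hfinv0' hf0, h2, pcomp_X_right]
  -- middle coefficients vanish
  have hmid : ∀ n, n < N → 2 ≤ n → coeff n c = 0 := by
    intro n
    induction n using Nat.strong_induction_on with
    | _ n IH =>
      intro hnN hn2
      have hsum := sum_helper hB0 hB1 hc0 hc1 hn2
        (fun m hm2 hmn => IH m hmn (lt_trans hmn hnN) hm2)
      rw [hcB] at hsum
      have hk := hK n (by omega)
      have hCX : coeff n (C ((i : ZMod p) * a * b) * X ^ N) = 0 := by
        rw [coeff_C_mul, coeff_X_pow, if_neg (by omega), mul_zero]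
      rw [hCX] at hk
      linear_combination -hsum - hk
  have hNc : coeff N c = -(i : ZMod p) * a * b := by
    have hN2 : 2 ≤ N := by omega
    have hsum := sum_helper hB0 hB1 hc0 hc1 hN2 (fun m hm2 hmn => hmid m hmn hm2)
    rw [hcB] at hsum
    have hk := hK N (by omega)
    have hCX : coeff N (C ((i : ZMod p) * a * b) * X ^ N) = (i : ZMod p) * a * b := by
      rw [coeff_C_mul, coeff_X_pow, if_pos rfl, mul_one]
    rw [hCX] at hk
    linear_combination -hsum - hk
  exact ⟨hc0, hc1, fun m hm2 hmN => hmid m hmN hm2, hNc⟩
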